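/- Let x and y be two stable allocations of a fixed pricing market with x_{i,j} * y_{i,j} = 0 for all i, j. Let I' be the set of buyers who spend strictly more in x than in y. Then for every buyer i in I' and every item j with x_{i,j} > 0: item j is fully allocated in y (sum_{i'} y_{i',j} = 1), and every buyer i'' with y_{i'',j} > 0 satisfies i'' >=_j i (no fraction of j held in y by a buyer with strictly lower priority than i). -/
import Mathlib


open Finset

/-- Stability in a fixed pricing market with personalized prices `p i j` and
priorities `pr j` (total preorders over buyers): budget-feasible, only
positively-valued items bought, and no buyer-item pair `(i, j)` with
`v i j > 0` exists such that a positive fraction of `j` is available to `i`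
(unsold, held by `i`, or held by a strictly lower-priority buyer) and `i`
either has unspent budget or strictly prefers `j` by bang-per-buck to some
item it holds. -/
def StableFP {n m : ℕ} (v p : Fin n → Fin m → ℝ) (B : Fin n → ℝ)
    (pr : Fin m → Fin n → Fin n → Prop) (x : Fin n → Fin m → ℝ) : Prop :=
  (∀ i j, 0 ≤ x i j ∧ x i j ≤ 1) ∧
  (∀ j, ∑ i, x i j ≤ 1) ∧
  (∀ i, ∑ j, p i j * x i j ≤ B i) ∧
  (∀ i j, 0 < x i j → 0 < v i j) ∧
  ¬ ∃ i j, 0 < v i j ∧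
      ((∑ i', x i' j) < 1 ∨ 0 < x i j ∨
        ∃ i', 0 < x i' j ∧ pr j i i' ∧ ¬ pr j i' i) ∧
      ((∑ j', p i j' * x i j') < B i ∨
        ∃ j', 0 < x i j' ∧ v i j' / p i j' < v i j / p i j)

theorem stmt_18 {n m : ℕ} (v p : Fin n → Fin m → ℝ) (B : Fin n → ℝ)
    (pr : Fin m → Fin n → Fin n → Prop)
    (hv : ∀ i j, 0 ≤ v i j) (hp : ∀ i j, 0 < p i j)
    (htotal : ∀ j i i', pr j i i' ∨ pr j i' i)
    (htrans : ∀ j i₁ i₂ i₃, pr j i₁ i₂ → pr j i₂ i₃ → pr j i₁ i₃)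
    (x y : Fin n → Fin m → ℝ)
    (hx : StableFP v p B pr x) (hy : StableFP v p B pr y)
    (hdisj : ∀ i j, x i j * y i j = 0) :
    ∀ i, (∑ j, p i j * y i j) < (∑ j, p i j * x i j) →
      ∀ j, 0 < x i j →
        (∑ i', y i' j) = 1 ∧ ∀ i'', 0 < y i'' j → pr j i'' i := by
  intro i hspend j hxij
  obtain ⟨-, -, hxB, hxv, -⟩ := hx
  obtain ⟨-, hysum, -, -, hyblock⟩ := hy
  have hvij : 0 < v i j := hxv i j hxij
  have hbudget : (∑ j', p i j' * y i j') < B i := lt_of_lt_of_le hspend (hxB i)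
  constructor
  · by_contra h
    exact hyblock ⟨i, j, hvij, Or.inl (lt_of_le_of_ne (hysum j) h), Or.inl hbudget⟩
  · intro i'' hyi''
    by_contra h
    rcases htotal j i i'' with hii | hii
    · exact hyblock ⟨i, j, hvij, Or.inr (Or.inr ⟨i'', hyi'', hii, h⟩), Or.inl hbudget⟩
    · exact h hii
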